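/- Let α, β, γ ∈ ℝ and consider the equation u_t = (1/2)u_x² + α u_yy − u_xxxx − 2u_xxyy − u_yyyy + β u_xx + γ (i.e., h = 0, g = α, r = β constants, f = γ). If F(y,t) satisfies the linear PDE F_t − αF_yy + F_yyyy = 0, then for every solution u of the equation and every ε, the function u + εF is also a solution; moreover, the function v(x,y,t) = u(x − εt, y, t) − εx + (ε²/2)t is also a solution. -/

import Mathlib

noncomputable section

def px (f : ℝ → ℝ → ℝ → ℝ) : ℝ → ℝ → ℝ → ℝ := fun x y t => deriv (fun s => f s y t) x
def py (f : ℝ → ℝ → ℝ → ℝ) : ℝ → ℝ → ℝ → ℝ := fun x y t => deriv (fun s => f x s t) y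
def pt (f : ℝ → ℝ → ℝ → ℝ) : ℝ → ℝ → ℝ → ℝ := fun x y t => deriv (fun s => f x y s) t

/-- Partial derivative in the first (y) argument of a function of `(y,t)`. -/
def qy (F : ℝ → ℝ → ℝ) : ℝ → ℝ → ℝ := fun y t => deriv (fun s => F s t) y
/-- Partial derivative in the second (t) argument of a function of `(y,t)`. -/
def qt (F : ℝ → ℝ → ℝ) : ℝ → ℝ → ℝ := fun y t => deriv (fun s => F y s) t

/-- `u` solves `u_t = (1/2)u_x² + βu_xx + αu_yy − u_xxxx − 2u_xxyy − u_yyyy + γ`. -/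
def IsSolConst (α β γ : ℝ) (u : ℝ → ℝ → ℝ → ℝ) : Prop :=
  ∀ x y t : ℝ,
    pt u x y t = (1 / 2) * (px u x y t) ^ 2 + β * px (px u) x y t
      + α * py (py u) x y t - px (px (px (px u))) x y t
      - 2 * px (px (py (py u))) x y t - py (py (py (py u))) x y t + γ

namespace AuxSym

/-- Uncurried version of a function of three real variables. -/
def unc (u : ℝ → ℝ → ℝ → ℝ) : ℝ × ℝ × ℝ → ℝ := fun p => u p.1 p.2.1 p.2.2
/-- Uncurried version of a function of two real variables. -/
def unc2 (F : ℝ → ℝ → ℝ) : ℝ × ℝ → ℝ := fun p => F p.1 p.2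

variable {u : ℝ → ℝ → ℝ → ℝ} {F : ℝ → ℝ → ℝ}

lemma fd3 (hu : ContDiff ℝ (⊤ : ℕ∞) (unc u)) (p : ℝ × ℝ × ℝ) :
    HasFDerivAt (unc u) (fderiv ℝ (unc u) p) p :=
  ((hu.differentiable (by simp)) p).hasFDerivAt

lemma fd2 (hF : ContDiff ℝ (⊤ : ℕ∞) (unc2 F)) (p : ℝ × ℝ) :
    HasFDerivAt (unc2 F) (fderiv ℝ (unc2 F) p) p :=
  ((hF.differentiable (by simp)) p).hasFDerivAt

lemma sliceX (hu : ContDiff ℝ (⊤ : ℕ∞) (unc u)) (x y t : ℝ) :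
    HasDerivAt (fun s => u s y t) (fderiv ℝ (unc u) (x, y, t) (1, 0, 0)) x := by
  have h : HasDerivAt (fun s : ℝ => ((s, y, t) : ℝ × ℝ × ℝ)) ((1 : ℝ), (0 : ℝ), (0 : ℝ)) x :=
    (hasDerivAt_id x).prodMk (hasDerivAt_const x (y, t))
  exact (fd3 hu (x, y, t)).comp_hasDerivAt x h

lemma sliceY (hu : ContDiff ℝ (⊤ : ℕ∞) (unc u)) (x y t : ℝ) :
    HasDerivAt (fun s => u x s t) (fderiv ℝ (unc u) (x, y, t) (0, 1, 0)) y := by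
  have h : HasDerivAt (fun s : ℝ => ((x, s, t) : ℝ × ℝ × ℝ)) ((0 : ℝ), (1 : ℝ), (0 : ℝ)) y :=
    (hasDerivAt_const y x).prodMk ((hasDerivAt_id y).prodMk (hasDerivAt_const y t))
  exact (fd3 hu (x, y, t)).comp_hasDerivAt y h

lemma sliceT (hu : ContDiff ℝ (⊤ : ℕ∞) (unc u)) (x y t : ℝ) :
    HasDerivAt (fun s => u x y s) (fderiv ℝ (unc u) (x, y, t) (0, 0, 1)) t := by
  have h : HasDerivAt (fun s : ℝ => ((x, y, s) : ℝ × ℝ × ℝ)) ((0 : ℝ), (0 : ℝ), (1 : ℝ)) t :=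
    (hasDerivAt_const t x).prodMk ((hasDerivAt_const t y).prodMk (hasDerivAt_id t))
  exact (fd3 hu (x, y, t)).comp_hasDerivAt t h

lemma px_fd (hu : ContDiff ℝ (⊤ : ℕ∞) (unc u)) (x y t : ℝ) :
    px u x y t = fderiv ℝ (unc u) (x, y, t) (1, 0, 0) := (sliceX hu x y t).deriv

lemma py_fd (hu : ContDiff ℝ (⊤ : ℕ∞) (unc u)) (x y t : ℝ) :
    py u x y t = fderiv ℝ (unc u) (x, y, t) (0, 1, 0) := (sliceY hu x y t).deriv

lemma pt_fd (hu : ContDiff ℝ (⊤ : ℕ∞) (unc u)) (x y t : ℝ) :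
    pt u x y t = fderiv ℝ (unc u) (x, y, t) (0, 0, 1) := (sliceT hu x y t).deriv

lemma hpx (hu : ContDiff ℝ (⊤ : ℕ∞) (unc u)) (x y t : ℝ) :
    HasDerivAt (fun s => u s y t) (px u x y t) x := by
  rw [px_fd hu]; exact sliceX hu x y t

lemma hpy (hu : ContDiff ℝ (⊤ : ℕ∞) (unc u)) (x y t : ℝ) :
    HasDerivAt (fun s => u x s t) (py u x y t) y := by
  rw [py_fd hu]; exact sliceY hu x y t

lemma hpt (hu : ContDiff ℝ (⊤ : ℕ∞) (unc u)) (x y t : ℝ) :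
    HasDerivAt (fun s => u x y s) (pt u x y t) t := by
  rw [pt_fd hu]; exact sliceT hu x y t

lemma smooth_px (hu : ContDiff ℝ (⊤ : ℕ∞) (unc u)) : ContDiff ℝ (⊤ : ℕ∞) (unc (px u)) := by
  have h : unc (px u) = fun p : ℝ × ℝ × ℝ => fderiv ℝ (unc u) p (1, 0, 0) := by
    funext p; exact px_fd hu p.1 p.2.1 p.2.2
  rw [h]
  exact (hu.fderiv_right (by simp)).clm_apply contDiff_const

lemma smooth_py (hu : ContDiff ℝ (⊤ : ℕ∞) (unc u)) : ContDiff ℝ (⊤ : ℕ∞) (unc (py u)) := by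
  have h : unc (py u) = fun p : ℝ × ℝ × ℝ => fderiv ℝ (unc u) p (0, 1, 0) := by
    funext p; exact py_fd hu p.1 p.2.1 p.2.2
  rw [h]
  exact (hu.fderiv_right (by simp)).clm_apply contDiff_const

lemma sliceQY (hF : ContDiff ℝ (⊤ : ℕ∞) (unc2 F)) (y t : ℝ) :
    HasDerivAt (fun s => F s t) (fderiv ℝ (unc2 F) (y, t) (1, 0)) y := by
  have h : HasDerivAt (fun s : ℝ => ((s, t) : ℝ × ℝ)) ((1 : ℝ), (0 : ℝ)) y :=
    (hasDerivAt_id y).prodMk (hasDerivAt_const y t)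
  exact (fd2 hF (y, t)).comp_hasDerivAt y h

lemma sliceQT (hF : ContDiff ℝ (⊤ : ℕ∞) (unc2 F)) (y t : ℝ) :
    HasDerivAt (fun s => F y s) (fderiv ℝ (unc2 F) (y, t) (0, 1)) t := by
  have h : HasDerivAt (fun s : ℝ => ((y, s) : ℝ × ℝ)) ((0 : ℝ), (1 : ℝ)) t :=
    (hasDerivAt_const t y).prodMk (hasDerivAt_id t)
  exact (fd2 hF (y, t)).comp_hasDerivAt t h

lemma qy_fd (hF : ContDiff ℝ (⊤ : ℕ∞) (unc2 F)) (y t : ℝ) :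
    qy F y t = fderiv ℝ (unc2 F) (y, t) (1, 0) := (sliceQY hF y t).deriv

lemma hqy (hF : ContDiff ℝ (⊤ : ℕ∞) (unc2 F)) (y t : ℝ) :
    HasDerivAt (fun s => F s t) (qy F y t) y := by
  rw [qy_fd hF]; exact sliceQY hF y t

lemma hqt (hF : ContDiff ℝ (⊤ : ℕ∞) (unc2 F)) (y t : ℝ) :
    HasDerivAt (fun s => F y s) (qt F y t) t := by
  have h := (sliceQT hF y t).deriv
  rw [show qt F y t = deriv (fun s => F y s) t from rfl, h]
  exact sliceQT hF y t

lemma smooth_qy (hF : ContDiff ℝ (⊤ : ℕ∞) (unc2 F)) : ContDiff ℝ (⊤ : ℕ∞) (unc2 (qy F)) := by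
  have h : unc2 (qy F) = fun p : ℝ × ℝ => fderiv ℝ (unc2 F) p (1, 0) := by
    funext p; exact qy_fd hF p.1 p.2
  rw [h]
  exact (hF.fderiv_right (by simp)).clm_apply contDiff_const

end AuxSym

open AuxSym

/-- For the case `h = 0`, `g = α`, `r = β`, `f = γ`: if `F(y,t)` solves
`F_t − αF_yy + F_yyyy = 0` then `u + εF` is a solution whenever `u` is, and the
Galilean map `v(x,y,t) = u(x − εt, y, t) − εx + (ε²/2)t` also maps solutions to
solutions. -/
theorem additive_and_galilean_symmetries
    (α β γ : ℝ) (u : ℝ → ℝ → ℝ → ℝ)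
    (hu : ContDiff ℝ (⊤ : ℕ∞) (fun p : ℝ × ℝ × ℝ => u p.1 p.2.1 p.2.2))
    (hsol : IsSolConst α β γ u)
    (F : ℝ → ℝ → ℝ) (hF : ContDiff ℝ (⊤ : ℕ∞) (fun p : ℝ × ℝ => F p.1 p.2))
    (hFpde : ∀ y t : ℝ,
      qt F y t - α * qy (qy F) y t + qy (qy (qy (qy F))) y t = 0)
    (ε : ℝ) :
    IsSolConst α β γ (fun x y t => u x y t + ε * F y t) ∧
    IsSolConst α β γ (fun x y t =>
      u (x - ε * t) y t - ε * x + (ε ^ 2 / 2) * t) := by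
  have hu' : ContDiff ℝ (⊤ : ℕ∞) (unc u) := hu
  have hF' : ContDiff ℝ (⊤ : ℕ∞) (unc2 F) := hF
  constructor
  · -- additive symmetry
    set v : ℝ → ℝ → ℝ → ℝ := fun x y t => u x y t + ε * F y t with hv
    have Epx : px v = px u := by
      funext x y t
      exact ((hpx hu' x y t).add_const (ε * F y t)).deriv
    have Epy : py v = fun x y t => py u x y t + ε * qy F y t := by
      funext x y t
      exact ((hpy hu' x y t).add ((hqy hF' y t).const_mul ε)).deriv
    have Ept : pt v = fun x y t => pt u x y t + ε * qt F y t := by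
      funext x y t
      exact ((hpt hu' x y t).add ((hqt hF' y t).const_mul ε)).deriv
    have Epyy : py (py v) = fun x y t => py (py u) x y t + ε * qy (qy F) y t := by
      rw [Epy]; funext x y t
      exact ((hpy (smooth_py hu') x y t).add ((hqy (smooth_qy hF') y t).const_mul ε)).deriv
    have Epyyy : py (py (py v)) =
        fun x y t => py (py (py u)) x y t + ε * qy (qy (qy F)) y t := by
      rw [Epyy]; funext x y t
      exact ((hpy (smooth_py (smooth_py hu')) x y t).add
        ((hqy (smooth_qy (smooth_qy hF')) y t).const_mul ε)).deriv
    have Epyyyy : py (py (py (py v))) =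
        fun x y t => py (py (py (py u))) x y t + ε * qy (qy (qy (qy F))) y t := by
      rw [Epyyy]; funext x y t
      exact ((hpy (smooth_py (smooth_py (smooth_py hu'))) x y t).add
        ((hqy (smooth_qy (smooth_qy (smooth_qy hF'))) y t).const_mul ε)).deriv
    have Epxyy : px (py (py v)) = px (py (py u)) := by
      rw [Epyy]; funext x y t
      exact ((hpx (smooth_py (smooth_py hu')) x y t).add_const (ε * qy (qy F) y t)).deriv
    have Epxx : px (px v) = px (px u) := by rw [Epx]
    have Epxxxx : px (px (px (px v))) = px (px (px (px u)))  := by rw [Epx]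
    have Epxxyy : px (px (py (py v))) = px (px (py (py u))) := by rw [Epxyy]
    intro x y t
    rw [Ept, Epxxxx, Epxxyy, Epyyyy, Epxx, Epyy, Epx]
    have h1 := hsol x y t
    have h2 := hFpde y t
    linear_combination h1 + ε * h2
  · -- Galilean symmetry
    set w : ℝ → ℝ → ℝ → ℝ :=
      fun x y t => u (x - ε * t) y t - ε * x + (ε ^ 2 / 2) * t with hw
    have hshift : ∀ t x : ℝ, HasDerivAt (fun s : ℝ => s - ε * t) 1 x := fun t x =>
      (hasDerivAt_id x).sub_const (ε * t)
    have Epx : px w = fun x y t => px u (x - ε * t) y t - ε := by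
      funext x y t
      have h1 : HasDerivAt (fun s => u (s - ε * t) y t) (px u (x - ε * t) y t) x := by
        have := (hpx hu' (x - ε * t) y t).comp x (hshift t x)
        simpa [Function.comp_def] using this
      have h2 := (h1.sub ((hasDerivAt_id x).const_mul ε)).add_const ((ε ^ 2 / 2) * t)
      have h3 : HasDerivAt (fun s => u (s - ε * t) y t - ε * s + (ε ^ 2 / 2) * t)
          (px u (x - ε * t) y t - ε) x := by simpa using h2
      exact h3.deriv
    have Epxx : px (px w) = fun x y t => px (px u) (x - ε * t) y t := by
      rw [Epx]; funext x y t
      have h1 : HasDerivAt (fun s => px u (s - ε * t) y t)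
          (px (px u) (x - ε * t) y t) x := by
        have := (hpx (smooth_px hu') (x - ε * t) y t).comp x (hshift t x)
        simpa [Function.comp_def] using this
      exact (h1.sub_const ε).deriv
    have Epxxx : px (px (px w)) = fun x y t => px (px (px u)) (x - ε * t) y t := by
      rw [Epxx]; funext x y t
      have h1 : HasDerivAt (fun s => px (px u) (s - ε * t) y t)
          (px (px (px u)) (x - ε * t) y t) x := by
        have := (hpx (smooth_px (smooth_px hu')) (x - ε * t) y t).comp x (hshift t x)
        simpa [Function.comp_def] using this
      exact h1.deriv
    have Epxxxx : px (px (px (px w))) =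
        fun x y t => px (px (px (px u))) (x - ε * t) y t := by
      rw [Epxxx]; funext x y t
      have h1 : HasDerivAt (fun s => px (px (px u)) (s - ε * t) y t)
          (px (px (px (px u))) (x - ε * t) y t) x := by
        have := (hpx (smooth_px (smooth_px (smooth_px hu'))) (x - ε * t) y t).comp x
          (hshift t x)
        simpa [Function.comp_def] using this
      exact h1.deriv
    have Epy : py w = fun x y t => py u (x - ε * t) y t := by
      funext x y t
      exact (((hpy hu' (x - ε * t) y t).sub_const (ε * x)).add_const ((ε ^ 2 / 2) * t)).deriv
    have Epyy : py (py w) = fun x y t => py (py u) (x - ε * t) y t := by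
      rw [Epy]; funext x y t
      exact (hpy (smooth_py hu') (x - ε * t) y t).deriv
    have Epyyy : py (py (py w)) = fun x y t => py (py (py u)) (x - ε * t) y t := by
      rw [Epyy]; funext x y t
      exact (hpy (smooth_py (smooth_py hu')) (x - ε * t) y t).deriv
    have Epyyyy : py (py (py (py w))) =
        fun x y t => py (py (py (py u))) (x - ε * t) y t := by
      rw [Epyyy]; funext x y t
      exact (hpy (smooth_py (smooth_py (smooth_py hu'))) (x - ε * t) y t).deriv
    have Epxyy : px (py (py w)) = fun x y t => px (py (py u)) (x - ε * t) y t := by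
      rw [Epyy]; funext x y t
      have h1 : HasDerivAt (fun s => py (py u) (s - ε * t) y t)
          (px (py (py u)) (x - ε * t) y t) x := by
        have := (hpx (smooth_py (smooth_py hu')) (x - ε * t) y t).comp x (hshift t x)
        simpa [Function.comp_def] using this
      exact h1.deriv
    have Epxxyy : px (px (py (py w))) =
        fun x y t => px (px (py (py u))) (x - ε * t) y t := by
      rw [Epxyy]; funext x y t
      have h1 : HasDerivAt (fun s => px (py (py u)) (s - ε * t) y t)
          (px (px (py (py u))) (x - ε * t) y t) x := by
        have := (hpx (smooth_px (smooth_py (smooth_py hu'))) (x - ε * t) y t).comp x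
          (hshift t x)
        simpa [Function.comp_def] using this
      exact h1.deriv
    have Ept : pt w = fun x y t =>
        pt u (x - ε * t) y t - ε * px u (x - ε * t) y t + ε ^ 2 / 2 := by
      funext x y t
      have hg : HasDerivAt (fun s : ℝ => ((x - ε * s, y, s) : ℝ × ℝ × ℝ))
          ((0 - ε * 1 : ℝ), (0 : ℝ), (1 : ℝ)) t :=
        ((hasDerivAt_const t x).sub ((hasDerivAt_id t).const_mul ε)).prodMk
          ((hasDerivAt_const t y).prodMk (hasDerivAt_id t))
      have h1 := (fd3 hu' (x - ε * t, y, t)).comp_hasDerivAt t hg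
      have hvec : ((0 - ε * 1 : ℝ), (0 : ℝ), (1 : ℝ)) =
          (-ε) • ((1 : ℝ), (0 : ℝ), (0 : ℝ)) + ((0 : ℝ), (0 : ℝ), (1 : ℝ)) := by
        simp [Prod.ext_iff]
      have hval : fderiv ℝ (unc u) (x - ε * t, y, t) ((0 - ε * 1 : ℝ), (0 : ℝ), (1 : ℝ)) =
          -ε * px u (x - ε * t) y t + pt u (x - ε * t) y t := by
        rw [hvec, map_add, map_smul, px_fd hu', pt_fd hu']
        simp [smul_eq_mul]
      rw [hval] at h1
      have h2 : HasDerivAt (fun s => u (x - ε * s) y s)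
          (-ε * px u (x - ε * t) y t + pt u (x - ε * t) y t) t := h1
      have h3 := (h2.sub_const (ε * x)).add ((hasDerivAt_id t).const_mul (ε ^ 2 / 2))
      have h4 : HasDerivAt (fun s => u (x - ε * s) y s - ε * x + (ε ^ 2 / 2) * s)
          (pt u (x - ε * t) y t - ε * px u (x - ε * t) y t + ε ^ 2 / 2) t := by
        exact h3.congr_deriv (by ring)
      exact h4.deriv
    intro x y t
    rw [Ept, Epxxxx, Epxxyy, Epyyyy, Epxx, Epyy, Epx]
    have h1 := hsol (x - ε * t) y t
    linear_combination h1
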